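/- Let F be a field of characteristic p. Suppose that for each p-subgroup P of G we are given a group homomorphism φ_P : N_G(P) → F^× with P ≤ ker(φ_P), such that φ_P(x) = φ_{P⟨x_p⟩}(x) for all p-subgroups P and all x ∈ N_G(P). If φ_{1} is the trivial homomorphism (where 1 denotes the trivial subgroup of G), then P·C_G(P) ≤ ker(φ_P) for every p-subgroup P of G. -/

import Mathlib

/-!  Common definitions: representations of finite groups over a commutative ring,
direct summands, permutation modules, vertices, Brauer-type trivial parts, characters,
p-parts of group elements, coherent tuples.  -/

open scoped TensorProduct

universe u v w

section Defs

variable {k : Type u} [CommSemiring k]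

/-- `ρ` is isomorphic to a direct summand of `σ`, equivariantly. -/
def IsSummand {G : Type*} [Monoid G] {V : Type*} [AddCommMonoid V] [Module k V]
    {W : Type*} [AddCommMonoid W] [Module k W]
    (ρ : Representation k G V) (σ : Representation k G W) : Prop :=
  ∃ (i : V →ₗ[k] W) (π : W →ₗ[k] V),
    (∀ g v, i (ρ g v) = σ g (i v)) ∧ (∀ g w, π (σ g w) = ρ g (π w)) ∧ ∀ v, π (i v) = v

/-- equivariant isomorphism of representations -/
def RepEquiv {G : Type*} [Monoid G] {V : Type*} [AddCommMonoid V] [Module k V]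
    {W : Type*} [AddCommMonoid W] [Module k W]
    (ρ : Representation k G V) (σ : Representation k G W) : Prop :=
  ∃ e : V ≃ₗ[k] W, ∀ g v, e (ρ g v) = σ g (e v)

/-- the direct sum of two representations -/
def prodRep {G : Type*} [Monoid G] {V : Type*} [AddCommMonoid V] [Module k V]
    {W : Type*} [AddCommMonoid W] [Module k W]
    (ρ : Representation k G V) (σ : Representation k G W) :
    Representation k G (V × W) where
  toFun g := (ρ g).prodMap (σ g)
  map_one' := by apply LinearMap.ext; intro v; simp
  map_mul' g h := by apply LinearMap.ext; intro v; simp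

/-- the permutation representation attached to an action of `G` on `X` by permutations -/
def permRep {G : Type*} [Group G] (X : Type*) (a : G →* Equiv.Perm X) :
    Representation k G (X → k) where
  toFun g := LinearMap.funLeft k k (a g⁻¹)
  map_one' := by apply LinearMap.ext; intro f; simp [LinearMap.funLeft]
  map_mul' g h := by
    apply LinearMap.ext; intro f; funext x
    simp [LinearMap.funLeft, mul_inv_rev]

/-- a p-permutation module over `k`: a module isomorphic to a direct summand of a
permutation module `k[X]` for a finite `G`-set `X` -/
def IsPermutationSummand {G : Type*} [Group G] {V : Type*} [AddCommMonoid V] [Module k V]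
    (ρ : Representation k G V) : Prop :=
  ∃ (X : Type u) (a : G →* Equiv.Perm X), Finite X ∧ IsSummand ρ (permRep X a)

/-- an indecomposable representation: nonzero, and every equivariant idempotent
endomorphism is `0` or the identity -/
def IsIndecomposableRep {G : Type*} [Monoid G] {V : Type*} [AddCommMonoid V] [Module k V]
    (ρ : Representation k G V) : Prop :=
  (∃ v : V, v ≠ 0) ∧ ∀ f : V →ₗ[k] V,
    (∀ g v, f (ρ g v) = ρ g (f v)) → (∀ v, f (f v) = f v) →
      (∀ v, f v = 0) ∨ (∀ v, f v = v)

/-- the carrier of the induced module `Ind_H^G (Res_H^G ρ)`: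
functions `f : G → V` with `f (h * g) = ρ h (f g)` for `h ∈ H` -/
def indResCarrier {G : Type*} [Group G] {V : Type*} [AddCommMonoid V] [Module k V]
    (ρ : Representation k G V) (H : Subgroup G) : Submodule k (G → V) where
  carrier := {f | ∀ (h : H) (g : G), f (↑h * g) = ρ ↑h (f g)}
  add_mem' := by
    intro f g hf hg h x
    simp only [Pi.add_apply, hf h x, hg h x, map_add]
  zero_mem' := by intro h x; simp
  smul_mem' := by
    intro c f hf h x
    simp only [Pi.smul_apply, hf h x, map_smul]

/-- the representation `Ind_H^G (Res_H^G ρ)`, with `G` acting by right translation -/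
def indResRep {G : Type*} [Group G] {V : Type*} [AddCommMonoid V] [Module k V]
    (ρ : Representation k G V) (H : Subgroup G) :
    Representation k G (indResCarrier ρ H) where
  toFun g :=
    { toFun := fun f => ⟨fun x => (f : G → V) (x * g), fun h x => by
        simpa [mul_assoc] using f.2 h (x * g)⟩
      map_add' := fun f₁ f₂ => rfl
      map_smul' := fun c f => rfl }
  map_one' := by
    apply LinearMap.ext; intro f; apply Subtype.ext; funext x; simp
  map_mul' g₁ g₂ := by
    apply LinearMap.ext; intro f; apply Subtype.ext; funext x
    show (f : G → V) (x * (g₁ * g₂)) = (f : G → V) (x * g₁ * g₂)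
    rw [mul_assoc]

/-- `ρ` is relatively `H`-projective in the sense that it is a direct summand of
`Ind_H^G (Res_H^G ρ)` -/
def IsRelativelyProjective {G : Type*} [Group G] {V : Type*} [AddCommMonoid V] [Module k V]
    (ρ : Representation k G V) (H : Subgroup G) : Prop :=
  IsSummand ρ (indResRep ρ H)

/-- `Q` is a vertex of `ρ`: minimal among the subgroups `R` with
`ρ` a direct summand of `Ind_R^G (Res_R^G ρ)` -/
def IsVertex {G : Type*} [Group G] {V : Type*} [AddCommMonoid V] [Module k V]
    (ρ : Representation k G V) (Q : Subgroup G) : Prop :=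
  IsRelativelyProjective ρ Q ∧ ∀ R : Subgroup G, R < Q → ¬ IsRelativelyProjective ρ R

end Defs

/-- a bundled representation of `G` over `k` -/
structure RepOn (k : Type u) (G : Type v) [CommSemiring k] [Monoid G] :
    Type (max (u + 1) v) where
  carrier : Type u
  [isAddCommGroup : AddCommGroup carrier]
  [isModule : Module k carrier]
  ρ : Representation k G carrier

attribute [instance] RepOn.isAddCommGroup RepOn.isModule

section Defs2

variable {k : Type u} [CommSemiring k]

/-- the subgroup `P` acts trivially on the representation `σ` -/
def TrivialOn {Γ : Type*} [Group Γ] {V : Type*} [AddCommMonoid V] [Module k V]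
    (σ : Representation k Γ V) (P : Subgroup Γ) : Prop :=
  ∀ x ∈ P, ∀ v : V, σ x v = v

/-- `A` is a `P`-trivial part of `σ`: `σ ≅ A ⊕ B` where `P` acts trivially on `A` and
no nonzero direct summand of `B` has trivial `P`-action -/
def IsTrivialPartFor {Γ : Type v} [Group Γ] {V : Type*} [AddCommMonoid V] [Module k V]
    (σ : Representation k Γ V) (P : Subgroup Γ) (A : RepOn k Γ) : Prop :=
  TrivialOn A.ρ P ∧
  ∃ B : RepOn k Γ, RepEquiv σ (prodRep A.ρ B.ρ) ∧
    ∀ U : RepOn k Γ, IsSummand U.ρ B.ρ → TrivialOn U.ρ P → ∀ u : U.carrier, u = 0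

/-- `A` is a `P`-trivial part `M_P` of `ρ`: a direct summand of
`Res^G_{N_G(P)} ρ` with trivial `P`-action whose complement has no nonzero direct
summand with trivial `P`-action -/
def IsPTrivialPart {G : Type v} [Group G] {V : Type*} [AddCommMonoid V] [Module k V]
    (ρ : Representation k G V) (P : Subgroup G) (A : RepOn k ↥(Subgroup.normalizer (P : Set G))) : Prop :=
  IsTrivialPartFor (ρ.comp (Subgroup.normalizer (P : Set G)).subtype) (P.subgroupOf (Subgroup.normalizer (P : Set G))) A

end Defs2

/-- the character value at `x` of the `K ⊗ₖ -` base change of the representation `σ` -/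
noncomputable def charAt {k : Type u} [CommRing k] (K : Type v) [CommRing K] [Algebra k K]
    {Γ : Type*} [Monoid Γ] {V : Type*} [AddCommGroup V] [Module k V]
    (σ : Representation k Γ V) (x : Γ) : K :=
  LinearMap.trace K (TensorProduct k K V) (LinearMap.baseChange K (σ x))

/-- the `p`-part of a group element (of finite order) -/
noncomputable def pPart (p : ℕ) {G : Type*} [Group G] (x : G) : G :=
  x ^ ((orderOf x / p ^ (orderOf x).factorization p) *
    (((orderOf x / p ^ (orderOf x).factorization p : ℕ) :
        ZMod (p ^ (orderOf x).factorization p))⁻¹).val)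

/-- the `p'`-part of a natural number -/
def pPrimePart (p n : ℕ) : ℕ := n / p ^ n.factorization p

/-- the conjugate subgroup `g P g⁻¹` -/
def conjSubgroup {G : Type*} [Group G] (g : G) (P : Subgroup G) : Subgroup G :=
  Subgroup.map (MulAut.conj g).toMonoidHom P

/-- `(ρM, ρN)` is an orthogonal unit pair:
`(M ⊗ M°) ⊕ (N ⊗ N°) ≅ k ⊕ (M ⊗ N°) ⊕ (N ⊗ M°)` equivariantly, i.e.
`[M] - [N]` is an orthogonal unit of the trivial source ring -/
def IsOrthogonalUnitPair {k : Type u} [CommRing k] {G : Type v} [Group G]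
    {V : Type*} [AddCommGroup V] [Module k V] {W : Type*} [AddCommGroup W] [Module k W]
    (ρM : Representation k G V) (ρN : Representation k G W) : Prop :=
  RepEquiv (prodRep (ρM.tprod ρM.dual) (ρN.tprod ρN.dual))
    (prodRep (Representation.trivial k (G := G) (V := k)) (prodRep (ρM.tprod ρN.dual) (ρN.tprod ρM.dual)))

/-- the type of `p`-subgroups of `G` -/
def pSubgroup (p : ℕ) (G : Type*) [Group G] : Type _ := {P : Subgroup G // IsPGroup p ↥P}

/-- a coherent `G`-stable tuple of linear characters:
`P ≤ ker φ_P`, `G`-stability, and the coherence condition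
`φ_P(x) = φ_{P⟨x_p⟩}(x)` for `x ∈ N_G(P)` -/
def CoherentPred (p : ℕ) {G : Type*} [Group G] {L : Type*} [CommMonoid L]
    (φ : ∀ P : pSubgroup p G, ↥(Subgroup.normalizer (P.1 : Set G)) →* Lˣ) : Prop :=
  (∀ (P : pSubgroup p G) (x : G) (hx : x ∈ P.1),
      φ P ⟨x, Subgroup.le_normalizer hx⟩ = 1) ∧
  (∀ (P Q : pSubgroup p G) (g x : G) (hx : x ∈ Subgroup.normalizer (P.1 : Set G)),
      Q.1 = conjSubgroup g P.1 → ∀ (hx' : g * x * g⁻¹ ∈ Subgroup.normalizer (Q.1 : Set G)),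
      φ Q ⟨g * x * g⁻¹, hx'⟩ = φ P ⟨x, hx⟩) ∧
  (∀ (P Q : pSubgroup p G) (x : G) (hx : x ∈ Subgroup.normalizer (P.1 : Set G)),
      Q.1 = P.1 ⊔ Subgroup.zpowers (pPart p x) → ∀ (hx' : x ∈ Subgroup.normalizer (Q.1 : Set G)),
      φ P ⟨x, hx⟩ = φ Q ⟨x, hx'⟩)

/-! Write `kerAt φ P` for `ker φ_P` viewed as a subgroup of `G`; `P ≤ kerAt φ P` is given.
A `p'`-element `c` centralizing a `p`-group `P` lies in `kerAt φ P` by induction on `P`, the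
case `P = 1` being the hypothesis on `φ_1`: for a maximal subgroup `R` of `P` and
`u ∈ N_P(R) \ R` we have `R⟨u⟩ = P` and `(u c)_p = u`, so coherence gives
`φ_P(c) = φ_P(u c) = φ_R(u c) = φ_R(u) φ_R(c) = 1`.  A general `c ∈ C_G(P)` factors as
`c = c_p c_{p'}`, and coherence with the `p`-group `Q = P⟨c_p⟩`, which `c` centralizes, gives
`φ_P(c) = φ_Q(c_p) φ_Q(c_{p'}) = 1`. -/

open Subgroup

section PPart

variable {G : Type*} [Group G] {p : ℕ}

theorem ZMod.mul_val_inv_modEq_one {m q : ℕ} [NeZero q] (h : m.Coprime q) :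
    m * ((m : ZMod q)⁻¹).val ≡ 1 [MOD q] := by
  rw [← ZMod.natCast_eq_natCast_iff]
  push_cast
  rw [ZMod.natCast_val, ZMod.cast_id]
  exact ZMod.coe_mul_inv_eq_one m h

theorem pPart_mul_eq_left (hp : p.Prime) {u c : G} (h : Commute u c) {α : ℕ}
    (hu : orderOf u = p ^ α) (hc : ¬ p ∣ orderOf c) : pPart p (u * c) = u := by
  set m := orderOf c
  have hm : m ≠ 0 := fun h0 => hc (h0 ▸ dvd_zero p)
  have hord : orderOf (u * c) = p ^ α * m := by
    rw [h.orderOf_mul_eq_mul_orderOf_of_coprime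
      (hu ▸ (hp.coprime_iff_not_dvd.mpr hc).pow_left α), hu]
  have hfac : (p ^ α * m).factorization p = α := by
    simp [Nat.factorization_mul (pow_ne_zero _ hp.ne_zero) hm, hp.factorization_pow,
      Nat.factorization_eq_zero_of_not_dvd hc]
  have hcompl : p ^ α * m / p ^ α = m := Nat.mul_div_cancel_left _ (pow_pos hp.pos α)
  have : NeZero (p ^ α) := ⟨pow_ne_zero _ hp.ne_zero⟩
  have hN : m * ((m : ZMod (p ^ α))⁻¹).val ≡ 1 [MOD p ^ α] :=
    ZMod.mul_val_inv_modEq_one ((hp.coprime_iff_not_dvd.mpr hc).symm.pow_right α)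
  rw [pPart, hord, hfac, hcompl, h.mul_pow, pow_mul c, pow_orderOf_eq_one, one_pow, mul_one]
  simpa using pow_eq_pow_iff_modEq.mpr (show _ ≡ 1 [MOD orderOf u] by rwa [hu])

theorem pPart_eq_self (hp : p.Prime) {u : G} {α : ℕ} (hu : orderOf u = p ^ α) :
    pPart p u = u := by
  simpa using pPart_mul_eq_left hp (Commute.one_right u) hu (by simpa using hp.ne_one)

theorem IsOfFinOrder.exists_mul_eq (hp : p.Prime) {x : G} (hx : IsOfFinOrder x) :
    ∃ d ∈ zpowers x, ∃ e ∈ zpowers x, d * e = x ∧ (∃ α, orderOf d = p ^ α) ∧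
      ¬ p ∣ orderOf e := by
  set n := orderOf x
  have hn : n ≠ 0 := hx.orderOf_pos.ne'
  set q := p ^ n.factorization p
  set m := n / q
  have hqm : (q : ℤ) * m = n := by exact_mod_cast Nat.ordProj_mul_ordCompl_eq_self n p
  have hbezout : (q : ℤ) * Nat.gcdA q m + m * Nat.gcdB q m = 1 := by
    rw [← Nat.gcd_eq_gcd_ab, ((Nat.coprime_ordCompl hp hn).pow_left _).gcd_eq_one, Nat.cast_one]
  have orderOf_zpow_dvd (a : ℤ) (b : ℕ) (hab : (n : ℤ) ∣ a * b) : orderOf (x ^ a) ∣ b :=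
    orderOf_dvd_of_pow_eq_one <| by
      rwa [← zpow_natCast, ← zpow_mul, ← orderOf_dvd_iff_zpow_eq_one]
  refine ⟨x ^ ((m : ℤ) * Nat.gcdB q m), zpow_mem_zpowers _ _,
    x ^ ((q : ℤ) * Nat.gcdA q m), zpow_mem_zpowers _ _, ?_, ?_, ?_⟩
  · rw [← zpow_add, add_comm, hbezout, zpow_one]
  · obtain ⟨α, -, hα⟩ := (Nat.dvd_prime_pow hp).mp
      (orderOf_zpow_dvd ((m : ℤ) * Nat.gcdB q m) q ⟨Nat.gcdB q m, by rw [← hqm]; ring⟩)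
    exact ⟨α, hα⟩
  · exact fun hdvd => Nat.not_dvd_ordCompl hp hn <| hdvd.trans <|
      orderOf_zpow_dvd ((q : ℤ) * Nat.gcdA q m) m ⟨Nat.gcdA q m, by rw [← hqm]; ring⟩

end PPart

section KerAt

variable {G : Type*} [Group G] {M : Type*} [MulOneClass M]

def kerAt (φ : ∀ P : Subgroup G, normalizer (P : Set G) →* M) (P : Subgroup G) : Subgroup G :=
  (φ P).ker.map (normalizer (P : Set G)).subtype

theorem mem_kerAt_iff {φ : ∀ P : Subgroup G, normalizer (P : Set G) →* M} {P : Subgroup G}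
    {x : G} (hx : x ∈ normalizer (P : Set G)) : x ∈ kerAt φ P ↔ φ P ⟨x, hx⟩ = 1 := by
  simp [kerAt, hx]

end KerAt

theorem Group.IsNilpotent.exists_lt_sup_zpowers_eq {G : Type*} [Group G] [Finite G]
    {P : Subgroup G} (hP : Group.IsNilpotent P) (hne : P ≠ ⊥) :
    ∃ R < P, ∃ u ∈ P, u ∈ normalizer (R : Set G) ∧ R ⊔ zpowers u = P := by
  obtain ⟨R, hRP, hRmax⟩ := Set.Finite.exists_maximalFor id {R : Subgroup G | R < P}
    (Set.toFinite _) ⟨⊥, bot_lt_iff_ne_bot.mpr hne⟩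
  have hRP' : R.subgroupOf P < ⊤ := by
    rw [lt_top_iff_ne_top, Ne, subgroupOf_eq_top]
    exact hRP.not_ge
  obtain ⟨u, huN, huR⟩ := SetLike.exists_of_lt <|
    (Group.normalizerCondition_of_isNilpotent _ hRP').trans_eq
      (subgroupOf_normalizer_eq hRP.le).symm
  refine ⟨R, hRP, u, u.2, mem_subgroupOf.mp huN, ?_⟩
  have hle : R ⊔ zpowers (u : G) ≤ P := sup_le hRP.le (zpowers_le.mpr u.2)
  refine hle.eq_of_not_lt fun hlt => huR (mem_subgroupOf.mpr ?_)
  exact hRmax hlt le_sup_left (mem_sup_right (mem_zpowers _))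

section Coherent

variable {p : ℕ} [Fact p.Prime] {G : Type*} [Group G] [Finite G] {M : Type*} [Group M]
  {φ : ∀ P : Subgroup G, normalizer (P : Set G) →* M}

theorem mem_kerAt_of_mem_centralizer_of_not_dvd
    (hker : ∀ P : Subgroup G, IsPGroup p P → P ≤ kerAt φ P)
    (hcoh : ∀ P : Subgroup G, IsPGroup p P → ∀ x ∈ normalizer (P : Set G),
      x ∈ normalizer ((P ⊔ zpowers (pPart p x) : Subgroup G) : Set G) →
      (x ∈ kerAt φ P ↔ x ∈ kerAt φ (P ⊔ zpowers (pPart p x))))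
    (hbot : ∀ x, x ∈ kerAt φ ⊥) {P : Subgroup G} (hP : IsPGroup p P) {c : G}
    (hc : c ∈ centralizer (P : Set G)) (hcp : ¬ p ∣ orderOf c) : c ∈ kerAt φ P := by
  have hp : p.Prime := Fact.out
  induction P using WellFoundedLT.induction with | _ P ih => ?_
  rcases eq_or_ne P ⊥ with rfl | hne
  · exact hbot c
  obtain ⟨R, hRP, u, huP, huR, hRu⟩ := hP.isNilpotent.exists_lt_sup_zpowers_eq hne
  have hR : IsPGroup p R := hP.to_le hRP.le
  have hcR : c ∈ centralizer (R : Set G) := centralizer_le hRP.le hc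
  obtain ⟨α, hu⟩ := (IsPGroup.iff_orderOf.mp hP) ⟨u, huP⟩
  rw [orderOf_mk] at hu
  have transport (y : G) (hyR : y ∈ normalizer (R : Set G)) (hyP : y ∈ normalizer (P : Set G))
      (hy : pPart p y = u) : y ∈ kerAt φ R ↔ y ∈ kerAt φ P := by
    have := hcoh R hR y hyR
    rw [hy, hRu] at this
    exact this hyP
  have huc : pPart p (u * c) = u :=
    pPart_mul_eq_left hp (mem_centralizer_iff.mp hc u huP) hu hcp
  have hukR : u ∈ kerAt φ R :=
    (transport u huR (le_normalizer huP) (pPart_eq_self hp hu)).mpr (hker P hP huP)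
  have hucR : u * c ∈ kerAt φ R := mul_mem hukR (ih R hRP hR hcR)
  have hucP : u * c ∈ kerAt φ P :=
    (transport (u * c) (mul_mem huR (centralizer_le_normalizer _ hcR))
      (mul_mem (le_normalizer huP) (centralizer_le_normalizer _ hc)) huc).mp hucR
  exact (mul_mem_cancel_left (hker P hP huP)).mp hucP

theorem mem_kerAt_of_mem_centralizer
    (hker : ∀ P : Subgroup G, IsPGroup p P → P ≤ kerAt φ P)
    (hcoh : ∀ P : Subgroup G, IsPGroup p P → ∀ x ∈ normalizer (P : Set G),
      x ∈ normalizer ((P ⊔ zpowers (pPart p x) : Subgroup G) : Set G) →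
      (x ∈ kerAt φ P ↔ x ∈ kerAt φ (P ⊔ zpowers (pPart p x))))
    (hbot : ∀ x, x ∈ kerAt φ ⊥) {P : Subgroup G} (hP : IsPGroup p P) {c : G}
    (hc : c ∈ centralizer (P : Set G)) : c ∈ kerAt φ P := by
  have hp : p.Prime := Fact.out
  obtain ⟨d, hd, e, he, rfl, ⟨α, hdα⟩, hep⟩ := (isOfFinOrder_of_finite c).exists_mul_eq hp
  have hde : pPart p (d * e) = d :=
    pPart_mul_eq_left hp (mem_centralizer_iff.mp (le_centralizer _ he) d hd) hdα hep
  set Q := P ⊔ zpowers d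
  have hQ : IsPGroup p Q :=
    hP.to_sup_of_normal_left' (IsPGroup.of_card (Nat.card_zpowers d ▸ hdα))
      ((zpowers_le.mpr (zpowers_le.mpr hc hd)).trans (centralizer_le_normalizer _))
  have hcQ : zpowers (d * e) ≤ centralizer (Q : Set G) :=
    le_centralizer_iff.mpr (sup_le (le_centralizer_iff.mp (zpowers_le.mpr hc))
      ((zpowers_le.mpr hd).trans (le_centralizer _)))
  have hcoh' := hcoh P hP (d * e) (centralizer_le_normalizer _ hc)
  rw [hde] at hcoh'
  refine (hcoh' (centralizer_le_normalizer _ (hcQ (mem_zpowers _)))).mpr (mul_mem ?_ ?_)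
  · exact hker Q hQ (mem_sup_right (mem_zpowers d))
  · exact mem_kerAt_of_mem_centralizer_of_not_dvd hker hcoh hbot hQ (hcQ he) hep

end Coherent

theorem statement13_general (p : ℕ) [Fact p.Prime]
    (G : Type w) [Group G] [Finite G]
    (F : Type v) [Field F]
    (φ : ∀ P : Subgroup G, ↥(Subgroup.normalizer (P : Set G)) →* Fˣ)
    (hker : ∀ (P : Subgroup G), IsPGroup p ↥P → ∀ (x : G) (hx : x ∈ P),
      φ P ⟨x, Subgroup.le_normalizer hx⟩ = 1)
    (hcoh : ∀ (P : Subgroup G), IsPGroup p ↥P → ∀ (x : G) (hx : x ∈ Subgroup.normalizer (P : Set G))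
      (hx' : x ∈ Subgroup.normalizer ((P ⊔ Subgroup.zpowers (pPart p x) : Subgroup G) : Set G)),
      φ P ⟨x, hx⟩ = φ (P ⊔ Subgroup.zpowers (pPart p x)) ⟨x, hx'⟩)
    (htriv : ∀ x : ↥(Subgroup.normalizer ((⊥ : Subgroup G) : Set G)), φ ⊥ x = 1) :
    ∀ (P : Subgroup G), IsPGroup p ↥P → ∀ (x : G),
      x ∈ P ⊔ Subgroup.centralizer (P : Set G) →
      ∀ hx : x ∈ Subgroup.normalizer (P : Set G), φ P ⟨x, hx⟩ = 1 := by
  have hker' (P : Subgroup G) (hP : IsPGroup p P) : P ≤ kerAt φ P := fun x hx =>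
    (mem_kerAt_iff _).mpr (hker P hP x hx)
  have hcoh' (P : Subgroup G) (hP : IsPGroup p P) (x : G) (hx : x ∈ normalizer (P : Set G))
      (hx' : x ∈ normalizer ((P ⊔ zpowers (pPart p x) : Subgroup G) : Set G)) :
      x ∈ kerAt φ P ↔ x ∈ kerAt φ (P ⊔ zpowers (pPart p x)) := by
    rw [mem_kerAt_iff hx, mem_kerAt_iff hx', hcoh P hP x hx hx']
  have hbot (x : G) : x ∈ kerAt φ ⊥ :=
    (mem_kerAt_iff (normalizer_eq_top (H := (⊥ : Subgroup G)) ▸ mem_top x)).mpr (htriv _)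
  intro P hP x hx hxN
  have hsup : P ⊔ centralizer (P : Set G) ≤ kerAt φ P :=
    sup_le (hker' P hP) fun c hc => mem_kerAt_of_mem_centralizer hker' hcoh' hbot hP hc
  exact (mem_kerAt_iff hxN).mp (hsup hx)

theorem statement13 (p : ℕ) [Fact p.Prime]
    (G : Type w) [Group G] [Finite G]
    (F : Type v) [Field F] [CharP F p]
    (φ : ∀ P : Subgroup G, ↥(Subgroup.normalizer (P : Set G)) →* Fˣ)
    (hker : ∀ (P : Subgroup G), IsPGroup p ↥P → ∀ (x : G) (hx : x ∈ P),
      φ P ⟨x, Subgroup.le_normalizer hx⟩ = 1)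
    (hcoh : ∀ (P : Subgroup G), IsPGroup p ↥P → ∀ (x : G) (hx : x ∈ Subgroup.normalizer (P : Set G))
      (hx' : x ∈ Subgroup.normalizer ((P ⊔ Subgroup.zpowers (pPart p x) : Subgroup G) : Set G)),
      φ P ⟨x, hx⟩ = φ (P ⊔ Subgroup.zpowers (pPart p x)) ⟨x, hx'⟩)
    (htriv : ∀ x : ↥(Subgroup.normalizer ((⊥ : Subgroup G) : Set G)), φ ⊥ x = 1) :
    ∀ (P : Subgroup G), IsPGroup p ↥P → ∀ (x : G),
      x ∈ P ⊔ Subgroup.centralizer (P : Set G) →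
      ∀ hx : x ∈ Subgroup.normalizer (P : Set G), φ P ⟨x, hx⟩ = 1 :=
  statement13_general p G F φ hker hcoh htriv
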